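/- arXiv:1407.1803 — 2 statements merged into one kernel-verified Lean document; each statement's English description precedes it below -/
import Mathlib

section
/- Saddle point characterization of the abstract stabilized mixed problem: assume a is symmetric, M is convex, and the stabilized coercivity assumption holds with some α > 0. Define the Lagrangian L_γ(v, μ) := (1/2) a(v, v) − L(v) + ∫_Ω ⟨μ, τv⟩ dm − ∫_Ω g μ_n dm − (1/2) ∫_Ω γ |μ + Tv|² dm for v ∈ V, μ ∈ M. Then (u, λ) ∈ V × M solves the abstract stabilized mixed problem (i)–(ii) if and only if (u, λ) is a saddle point, i.e. L_γ(u, μ) ≤ L_γ(u, λ) ≤ L_γ(v, λ) for all v ∈ V and all μ ∈ M. -/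
/-! The stabilized Lagrangian is quadratic in each argument. Expanding at `(u, λ)`,
`L_γ(u + w, λ) = L_γ(u, λ) + E(w) + ½ (a(w, w) − ∫ γ |Tw|²)` and
`L_γ(u, λ + w) = L_γ(u, λ) + D(w) − ½ ∫ γ |w|²`,
where `E = 0` is (i) and `D(μ − λ) ≤ 0` for `μ ∈ M` is (ii). Since the quadratic terms have the
right sign (stabilized coercivity and `γ > 0`), (i)–(ii) give the saddle point inequalities.
Conversely, testing the saddle inequalities at `u + t w` and at `λ + t (μ − λ) ∈ M` and letting
`t → 0⁺` kills the quadratic terms. Everything is linear algebra once the `L²` pairings are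
viewed as bilinear forms on the submodule of square-integrable functions. -/

open MeasureTheory

/-- The stabilized Lagrangian
`L_γ(v, μ) = ½ a(v,v) − L(v) + ∫ ⟨μ, τv⟩ dm − ∫ g μₙ dm − ½ ∫ γ |μ + Tv|² dm`. -/
noncomputable def stabilizedLagrangian
    {Ω : Type*} [MeasurableSpace Ω] (m : Measure Ω) (γ : Ω → ℝ)
    {V : Type*} [NormedAddCommGroup V] [InnerProductSpace ℝ V]
    (τ T : V →ₗ[ℝ] Ω → ℝ × ℝ)
    (a : V →ₗ[ℝ] V →ₗ[ℝ] ℝ) (L : V →ₗ[ℝ] ℝ) (g : Ω → ℝ)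
    (v : V) (μ : Ω → ℝ × ℝ) : ℝ :=
  (1 / 2) * a v v - L v
    + (∫ ω, ((μ ω).1 * (τ v ω).1 + (μ ω).2 * (τ v ω).2) ∂m)
    - (∫ ω, g ω * (μ ω).1 ∂m)
    - (1 / 2) * ∫ ω, γ ω * (((μ ω).1 + (T v ω).1) ^ 2 + ((μ ω).2 + (T v ω).2) ^ 2) ∂m

open Filter Topology
open scoped ENNReal

theorem nonpos_of_forall_mul_le_sq_mul {c q : ℝ}
    (h : ∀ t : ℝ, 0 < t → t ≤ 1 → t * c ≤ t ^ 2 * q) : c ≤ 0 := by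
  have hlim : Tendsto (fun t : ℝ => t * q) (𝓝 0) (𝓝 0) := by
    simpa using (tendsto_id (x := 𝓝 (0 : ℝ))).mul_const q
  refine ge_of_tendsto (x := 𝓝[>] 0) (hlim.mono_left nhdsWithin_le_nhds) ?_
  filter_upwards [Ioo_mem_nhdsGT one_pos] with t ⟨ht₀, ht₁⟩
  have := h t ht₀ ht₁.le
  rw [sq, mul_assoc] at this
  exact le_of_mul_le_mul_left this ht₀

section LinearFunctional

variable {W : Type*} [AddCommGroup W] [Module ℝ W]

theorem StarConvex.apply_sub_nonpos_of_le_bilinForm {M : Set W} {l : W}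
    (hM : StarConvex ℝ l M) (f : W →ₗ[ℝ] ℝ) (Q : LinearMap.BilinForm ℝ W)
    (h : ∀ μ ∈ M, f (μ - l) ≤ Q (μ - l) (μ - l)) : ∀ μ ∈ M, f (μ - l) ≤ 0 := by
  intro μ hμ
  refine nonpos_of_forall_mul_le_sq_mul (q := Q (μ - l) (μ - l)) fun t ht₀ ht₁ => ?_
  simpa [sq, mul_assoc] using h _ (hM.add_smul_sub_mem hμ ht₀.le ht₁)

theorem LinearMap.eq_zero_of_forall_le_bilinForm_self (f : W →ₗ[ℝ] ℝ)
    (Q : LinearMap.BilinForm ℝ W) (h : ∀ w, f w ≤ Q w w) : f = 0 := by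
  have hle : ∀ w, f w ≤ 0 := by
    simpa using (starConvex_univ (0 : W)).apply_sub_nonpos_of_le_bilinForm f Q (by simpa using h)
  ext w
  simpa using le_antisymm (hle w) (by simpa using hle (-w))

end LinearFunctional

section MixedLagrangian

variable {V W : Type*} [AddCommGroup V] [Module ℝ V] [AddCommGroup W] [Module ℝ W]
  (a : LinearMap.BilinForm ℝ V) (L : V →ₗ[ℝ] ℝ) (τ T : V →ₗ[ℝ] W)
  (P B : LinearMap.BilinForm ℝ W) (G : W →ₗ[ℝ] ℝ)

noncomputable def mixedLagrangian (v : V) (μ : W) : ℝ :=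
  (1 / 2) * a v v - L v + P μ (τ v) - G μ - (1 / 2) * B (μ + T v) (μ + T v)

def primalResidual (u : V) (l : W) : V →ₗ[ℝ] ℝ :=
  a u + P l ∘ₗ τ - B (l + T u) ∘ₗ T - L

def dualResidual (u : V) (l : W) : W →ₗ[ℝ] ℝ :=
  P.flip (τ u) - B.flip (l + T u) - G

variable {a L τ T P B G}

theorem primalResidual_apply (u : V) (l : W) (w : V) :
    primalResidual a L τ T P B u l w = a u w + P l (τ w) - B (l + T u) (T w) - L w :=
  rfl

theorem dualResidual_apply (u : V) (l w : W) :
    dualResidual τ T P B G u l w = P w (τ u) - B w (l + T u) - G w :=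
  rfl

theorem mixedLagrangian_add_left (ha : a.IsSymm) (hB : B.IsSymm) (u w : V) (l : W) :
    mixedLagrangian a L τ T P B G (u + w) l = mixedLagrangian a L τ T P B G u l
      + primalResidual a L τ T P B u l w + (1 / 2) * (a - B.compl₁₂ T T) w w := by
  simp only [mixedLagrangian, primalResidual_apply, map_add, LinearMap.add_apply,
    LinearMap.sub_apply, LinearMap.compl₁₂_apply]
  rw [ha.eq w u, hB.eq (T w) l, hB.eq (T w) (T u)]
  ring

theorem mixedLagrangian_add_right (hB : B.IsSymm) (u : V) (l w : W) :
    mixedLagrangian a L τ T P B G u (l + w) = mixedLagrangian a L τ T P B G u l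
      + dualResidual τ T P B G u l w - (1 / 2) * B w w := by
  have hsplit : l + w + T u = (l + T u) + w := by abel
  simp only [mixedLagrangian, dualResidual_apply, hsplit, map_add, LinearMap.add_apply]
  rw [hB.eq w l, hB.eq w (T u)]
  ring

theorem forall_le_mixedLagrangian_iff (ha : a.IsSymm) (hB : B.IsSymm)
    (hcoer : (a - B.compl₁₂ T T).IsNonneg) {u : V} {l : W} :
    (∀ v, mixedLagrangian a L τ T P B G u l ≤ mixedLagrangian a L τ T P B G v l) ↔
      primalResidual a L τ T P B u l = 0 := by
  have hexp : ∀ v, mixedLagrangian a L τ T P B G v l = mixedLagrangian a L τ T P B G u l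
      + primalResidual a L τ T P B u l (v - u) + (1 / 2) * (a - B.compl₁₂ T T) (v - u) (v - u) :=
    fun v => by rw [← mixedLagrangian_add_left ha hB, add_sub_cancel]
  constructor
  · intro h
    refine neg_eq_zero.mp <| LinearMap.eq_zero_of_forall_le_bilinForm_self _
      ((1 / 2 : ℝ) • (a - B.compl₁₂ T T)) fun w => ?_
    have := h (u + w)
    rw [hexp (u + w), add_sub_cancel_left] at this
    simp only [LinearMap.neg_apply, LinearMap.smul_apply, smul_eq_mul]
    linarith
  · intro h v
    rw [hexp v, h, LinearMap.zero_apply]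
    linarith [hcoer.nonneg (v - u)]

theorem forall_mixedLagrangian_le_iff (hB : B.IsSymm) (hBnn : B.IsNonneg) {M : Set W}
    (hM : Convex ℝ M) {u : V} {l : W} (hl : l ∈ M) :
    (∀ μ ∈ M, mixedLagrangian a L τ T P B G u μ ≤ mixedLagrangian a L τ T P B G u l) ↔
      ∀ μ ∈ M, dualResidual τ T P B G u l (μ - l) ≤ 0 := by
  have hexp : ∀ μ, mixedLagrangian a L τ T P B G u μ = mixedLagrangian a L τ T P B G u l
      + dualResidual τ T P B G u l (μ - l) - (1 / 2) * B (μ - l) (μ - l) :=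
    fun μ => by rw [← mixedLagrangian_add_right hB, add_sub_cancel]
  constructor
  · intro h
    refine (hM.starConvex hl).apply_sub_nonpos_of_le_bilinForm _ ((1 / 2 : ℝ) • B) fun μ hμ => ?_
    have := h μ hμ
    rw [hexp μ] at this
    simp only [LinearMap.smul_apply, smul_eq_mul]
    linarith
  · intro h μ hμ
    rw [hexp μ]
    linarith [h μ hμ, hBnn.nonneg (μ - l)]

end MixedLagrangian

section L2Pairing

variable {Ω : Type*} [MeasurableSpace Ω]

def memLpSubmodule (E : Type*) [NormedAddCommGroup E] [NormedSpace ℝ E] (p : ℝ≥0∞)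
    (m : Measure Ω) : Submodule ℝ (Ω → E) where
  carrier := {f | MemLp f p m}
  add_mem' := MemLp.add
  zero_mem' := MemLp.zero
  smul_mem' c _ hf := hf.const_smul c

variable {E : Type*} [NormedAddCommGroup E] [NormedSpace ℝ E] {p : ℝ≥0∞} {m : Measure Ω}

theorem mem_memLpSubmodule {f : Ω → E} : f ∈ memLpSubmodule E p m ↔ MemLp f p m :=
  Iff.rfl

def LinearMap.toMemLpSubmodule {V : Type*} [AddCommGroup V] [Module ℝ V] (f : V →ₗ[ℝ] Ω → E)
    (hf : ∀ v, MemLp (f v) p m) : V →ₗ[ℝ] memLpSubmodule E p m :=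
  f.codRestrict _ fun v => mem_memLpSubmodule.2 (hf v)

def memLpSubmodule.weightMul {γ : Ω → ℝ} (hγ : MemLp γ ∞ m) :
    memLpSubmodule E p m →ₗ[ℝ] memLpSubmodule E p m where
  toFun f := ⟨γ • (f : Ω → E), mem_memLpSubmodule.2 (f.2.smul hγ)⟩
  map_add' f h := Subtype.ext (smul_add γ (f : Ω → E) h)
  map_smul' c f := Subtype.ext (smul_comm γ c (f : Ω → E))

variable (m)

theorem integrable_fst_mul_add_snd_mul {f h : Ω → ℝ × ℝ} (hf : MemLp f 2 m) (hh : MemLp h 2 m) :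
    Integrable (fun ω => (f ω).1 * (h ω).1 + (f ω).2 * (h ω).2) m :=
  (hf.fst.integrable_mul hh.fst).add (hf.snd.integrable_mul hh.snd)

noncomputable def l2Pairing : LinearMap.BilinForm ℝ (memLpSubmodule (ℝ × ℝ) 2 m) :=
  LinearMap.mk₂ ℝ (fun f h => ∫ ω, (f.1 ω).1 * (h.1 ω).1 + (f.1 ω).2 * (h.1 ω).2 ∂m)
    (fun f f' h => by
      rw [← integral_add (integrable_fst_mul_add_snd_mul m f.2 h.2)
        (integrable_fst_mul_add_snd_mul m f'.2 h.2)]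
      refine integral_congr_ae (.of_forall fun ω => ?_)
      simp only [Submodule.coe_add, Pi.add_apply, Prod.fst_add, Prod.snd_add]
      ring)
    (fun c f h => by
      rw [smul_eq_mul, ← integral_const_mul]
      refine integral_congr_ae (.of_forall fun ω => ?_)
      simp only [Submodule.coe_smul, Pi.smul_apply, Prod.smul_fst, Prod.smul_snd, smul_eq_mul]
      ring)
    (fun f h h' => by
      rw [← integral_add (integrable_fst_mul_add_snd_mul m f.2 h.2)
        (integrable_fst_mul_add_snd_mul m f.2 h'.2)]
      refine integral_congr_ae (.of_forall fun ω => ?_)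
      simp only [Submodule.coe_add, Pi.add_apply, Prod.fst_add, Prod.snd_add]
      ring)
    (fun c f h => by
      rw [smul_eq_mul, ← integral_const_mul]
      refine integral_congr_ae (.of_forall fun ω => ?_)
      simp only [Submodule.coe_smul, Pi.smul_apply, Prod.smul_fst, Prod.smul_snd, smul_eq_mul]
      ring)

noncomputable def weightedPairing {γ : Ω → ℝ} (hγ : MemLp γ ∞ m) :
    LinearMap.BilinForm ℝ (memLpSubmodule (ℝ × ℝ) 2 m) :=
  l2Pairing m ∘ₗ memLpSubmodule.weightMul hγ

noncomputable def fstPairing {g : Ω → ℝ} (hg : MemLp g 2 m) :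
    memLpSubmodule (ℝ × ℝ) 2 m →ₗ[ℝ] ℝ :=
  l2Pairing m ⟨_, mem_memLpSubmodule.2 ((ContinuousLinearMap.inl ℝ ℝ ℝ).comp_memLp' hg)⟩

variable {γ : Ω → ℝ} (hγ : MemLp γ ∞ m)

theorem weightedPairing_apply (f h : memLpSubmodule (ℝ × ℝ) 2 m) :
    weightedPairing m hγ f h = ∫ ω, γ ω * ((f.1 ω).1 * (h.1 ω).1 + (f.1 ω).2 * (h.1 ω).2) ∂m :=
  integral_congr_ae (.of_forall fun ω => by
    simp only [memLpSubmodule.weightMul, LinearMap.coe_mk, AddHom.coe_mk, Pi.smul_apply',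
      Prod.smul_fst, Prod.smul_snd, smul_eq_mul]
    ring)

theorem weightedPairing_self (f : memLpSubmodule (ℝ × ℝ) 2 m) :
    weightedPairing m hγ f f = ∫ ω, γ ω * ((f.1 ω).1 ^ 2 + (f.1 ω).2 ^ 2) ∂m := by
  rw [weightedPairing_apply]
  exact integral_congr_ae (.of_forall fun ω => by ring)

theorem weightedPairing_isSymm : (weightedPairing m hγ).IsSymm :=
  ⟨fun f h => by
    simp only [weightedPairing_apply]
    exact integral_congr_ae (.of_forall fun ω => by ring)⟩

theorem weightedPairing_isNonneg (hγpos : ∀ᵐ ω ∂m, 0 < γ ω) : (weightedPairing m hγ).IsNonneg :=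
  ⟨fun f => by
    rw [weightedPairing_self]
    exact integral_nonneg_of_ae (hγpos.mono fun ω hω => by positivity)⟩

theorem fstPairing_apply {g : Ω → ℝ} (hg : MemLp g 2 m) (f : memLpSubmodule (ℝ × ℝ) 2 m) :
    fstPairing m hg f = ∫ ω, g ω * (f.1 ω).1 ∂m :=
  integral_congr_ae (.of_forall fun ω => by simp)

end L2Pairing

theorem stabilizedLagrangian_eq_mixedLagrangian {Ω : Type*} [MeasurableSpace Ω] {m : Measure Ω}
    {γ : Ω → ℝ} (hγ : MemLp γ ∞ m) {V : Type*} [NormedAddCommGroup V] [InnerProductSpace ℝ V]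
    {τ T : V →ₗ[ℝ] Ω → ℝ × ℝ} (hτ : ∀ v, MemLp (τ v) 2 m) (hT : ∀ v, MemLp (T v) 2 m)
    {a : V →ₗ[ℝ] V →ₗ[ℝ] ℝ} {L : V →ₗ[ℝ] ℝ} {g : Ω → ℝ} (hg : MemLp g 2 m)
    (v : V) (μ : memLpSubmodule (ℝ × ℝ) 2 m) :
    stabilizedLagrangian m γ τ T a L g v μ =
      mixedLagrangian a L (τ.toMemLpSubmodule hτ) (T.toMemLpSubmodule hT) (l2Pairing m)
        (weightedPairing m hγ) (fstPairing m hg) v μ := by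
  rw [stabilizedLagrangian, mixedLagrangian, weightedPairing_self, fstPairing_apply]
  rfl

/-- Saddle point characterization of the abstract stabilized mixed problem: with `a`
symmetric, `M` convex and the stabilized coercivity assumption, `(u, λ)` solves the mixed
problem (i)–(ii) iff it is a saddle point of the stabilized Lagrangian `L_γ`. -/
theorem stabilized_mixed_saddle_point
    {Ω : Type*} [MeasurableSpace Ω] (m : Measure Ω)
    (γ : Ω → ℝ) (hγ : MemLp γ ⊤ m) (hγpos : ∀ᵐ ω ∂m, 0 < γ ω)
    {V : Type*} [NormedAddCommGroup V] [InnerProductSpace ℝ V]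
    (τ T : V →ₗ[ℝ] Ω → ℝ × ℝ)
    (hτ : ∀ v : V, MemLp (τ v) 2 m) (hT : ∀ v : V, MemLp (T v) 2 m)
    (a : V →ₗ[ℝ] V →ₗ[ℝ] ℝ) (hsymm : ∀ v w : V, a v w = a w v)
    (L : V →ₗ[ℝ] ℝ) (g : Ω → ℝ) (hg : MemLp g 2 m)
    (M : Set (Ω → ℝ × ℝ)) (hM : ∀ μ ∈ M, MemLp μ 2 m) (hMconv : Convex ℝ M)
    (α : ℝ) (hα : 0 < α)
    (hcoer : ∀ v : V,
      α * ‖v‖ ^ 2 ≤ a v v - ∫ ω, γ ω * ((T v ω).1 ^ 2 + (T v ω).2 ^ 2) ∂m)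
    (u : V) (l : Ω → ℝ × ℝ) (hl : l ∈ M) :
    ((∀ v : V,
        a u v + (∫ ω, ((l ω).1 * (τ v ω).1 + (l ω).2 * (τ v ω).2) ∂m)
          - (∫ ω, γ ω * (((l ω).1 + (T u ω).1) * (T v ω).1
              + ((l ω).2 + (T u ω).2) * (T v ω).2) ∂m) = L v) ∧
      (∀ μ ∈ M,
        (∫ ω, (((μ ω).1 - (l ω).1) * (τ u ω).1
            + ((μ ω).2 - (l ω).2) * (τ u ω).2) ∂m)
          - (∫ ω, γ ω * (((μ ω).1 - (l ω).1) * ((l ω).1 + (T u ω).1)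
              + ((μ ω).2 - (l ω).2) * ((l ω).2 + (T u ω).2)) ∂m)
        ≤ ∫ ω, g ω * ((μ ω).1 - (l ω).1) ∂m))
    ↔ ((∀ μ ∈ M, stabilizedLagrangian m γ τ T a L g u μ
          ≤ stabilizedLagrangian m γ τ T a L g u l) ∧
       (∀ v : V, stabilizedLagrangian m γ τ T a L g u l
          ≤ stabilizedLagrangian m γ τ T a L g v l)) := by
  have hcoer' : LinearMap.BilinForm.IsNonneg
      (a - (weightedPairing m hγ).compl₁₂ (T.toMemLpSubmodule hT) (T.toMemLpSubmodule hT)) :=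
    ⟨fun v => by
      rw [LinearMap.sub_apply, LinearMap.sub_apply, LinearMap.compl₁₂_apply, weightedPairing_self]
      exact (mul_nonneg hα.le (sq_nonneg ‖v‖)).trans (hcoer v)⟩
  have hforall : ∀ Φ : (Ω → ℝ × ℝ) → Prop,
      (∀ μ ∈ M, Φ μ) ↔ ∀ μ ∈ (memLpSubmodule (ℝ × ℝ) 2 m).subtype ⁻¹' M, Φ μ :=
    fun Φ => ⟨fun h μ hμ => h μ hμ, fun h μ hμ => h ⟨μ, hM μ hμ⟩ hμ⟩
  lift l to memLpSubmodule (ℝ × ℝ) 2 m using hM l hl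
  rw [hforall, hforall]
  simp only [stabilizedLagrangian_eq_mixedLagrangian hγ hτ hT hg]
  rw [forall_le_mixedLagrangian_iff (LinearMap.BilinForm.isSymm_def.2 hsymm)
      (weightedPairing_isSymm m hγ) hcoer',
    forall_mixedLagrangian_le_iff (weightedPairing_isSymm m hγ)
      (weightedPairing_isNonneg m hγ hγpos) (hMconv.linear_preimage _) hl]
  refine (and_congr ?_ ?_).trans and_comm
  · rw [LinearMap.ext_iff]
    refine forall_congr' fun v => ?_
    rw [primalResidual_apply, weightedPairing_apply, LinearMap.zero_apply, sub_eq_zero]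
    rfl
  · refine forall₂_congr fun μ _ => ?_
    rw [dualResidual_apply, weightedPairing_apply, fstPairing_apply, sub_nonpos]
    rfl
end

section
/- Stability of the abstract stabilized mixed problem: assume the stabilized coercivity assumption holds with some α > 0, let (u, λ) ∈ V × M solve the abstract stabilized mixed problem (i)–(ii), and assume the three modified multipliers (0, λ_t), (2λ_n, λ_t) and (λ_n, 0) also belong to M. If moreover |L(v)| ≤ C₀ ‖v‖_V for all v ∈ V with some constant C₀ ≥ 0, then α ‖u‖_V² + ∫_Ω γ |λ|² dm ≤ C₀ ‖u‖_V − ∫_Ω g λ_n dm. -/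
/-!
Test (i) with `v = u`, and (ii) with `(0, λₜ)` and `(λₙ, 0)`: the two increments `μ - λ` add up
to `-λ`. Adding the results, the stabilization terms combine through
`∫ γ ⟨λ + Tu, Tu⟩ - ∫ γ |Tu|² + ∫ γ |λ|² = ∫ γ ⟨λ, λ + Tu⟩`, and stabilized coercivity together
with `L u ≤ C₀ ‖u‖` gives the bound.
-/

open MeasureTheory

/-- The euclidean inner product of `ℝ²`; `ℝ × ℝ` itself carries the sup norm. -/
def dot (x y : ℝ × ℝ) : ℝ := x.1 * y.1 + x.2 * y.2

lemma dot_add_left (x y z : ℝ × ℝ) : dot (x + y) z = dot x z + dot y z := by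
  simp only [dot, Prod.fst_add, Prod.snd_add]; ring

lemma dot_neg_left (x y : ℝ × ℝ) : dot (-x) y = -dot x y := by
  simp only [dot, Prod.fst_neg, Prod.snd_neg]; ring

section Integrals

variable {Ω : Type*} [MeasurableSpace Ω] {m : Measure Ω} {γ : Ω → ℝ} {f h : Ω → ℝ × ℝ}

lemma integrable_dot (hf : MemLp f 2 m) (hh : MemLp h 2 m) :
    Integrable (fun ω => dot (f ω) (h ω)) m :=
  (hf.fst.integrable_mul hh.fst).add (hf.snd.integrable_mul hh.snd)

lemma integrable_mul_dot (hγ : MemLp γ ⊤ m) (hf : MemLp f 2 m) (hh : MemLp h 2 m) :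
    Integrable (fun ω => γ ω * dot (f ω) (h ω)) m :=
  (integrable_dot hf hh).mul_of_top_right hγ

lemma integral_mul_dot_add_sub_sq_add_sq (hγ : MemLp γ ⊤ m) (hf : MemLp f 2 m)
    (hh : MemLp h 2 m) :
    (∫ ω, γ ω * dot ((f + h) ω) (h ω) ∂m)
        - (∫ ω, γ ω * ((h ω).1 ^ 2 + (h ω).2 ^ 2) ∂m)
        + (∫ ω, γ ω * ((f ω).1 ^ 2 + (f ω).2 ^ 2) ∂m)
      = ∫ ω, γ ω * dot (f ω) ((f + h) ω) ∂m := by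
  have hsq {k : Ω → ℝ × ℝ} (hk : MemLp k 2 m) :
      (∫ ω, γ ω * ((k ω).1 ^ 2 + (k ω).2 ^ 2) ∂m) = ∫ ω, γ ω * dot (k ω) (k ω) ∂m :=
    integral_congr_ae (.of_forall fun ω => by simp only [dot]; ring)
  have hfhh := integrable_mul_dot hγ (hf.add hh) hh
  have hhh := integrable_mul_dot hγ hh hh
  rw [hsq hh, hsq hf, ← integral_sub hfhh hhh, ← integral_add _ (integrable_mul_dot hγ hf hf)]
  · exact integral_congr_ae (.of_forall fun ω => by
      simp only [dot, Pi.add_apply, Prod.fst_add, Prod.snd_add]; ring)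
  · exact hfhh.sub hhh

/-- The left-hand side of the variational inequality (ii) for the increment `w = μ - λ`, with
`p = τu` and `q = λ + Tu`. -/
noncomputable def stabilizedPairing (m : Measure Ω) (γ : Ω → ℝ) (p q w : Ω → ℝ × ℝ) : ℝ :=
  (∫ ω, dot (w ω) (p ω) ∂m) - ∫ ω, γ ω * dot (w ω) (q ω) ∂m

variable {p q w w' : Ω → ℝ × ℝ}

lemma stabilizedPairing_neg : stabilizedPairing m γ p q (-w) = -stabilizedPairing m γ p q w := by
  simp only [stabilizedPairing, Pi.neg_apply, dot_neg_left, mul_neg, integral_neg]; ring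

lemma stabilizedPairing_add (hγ : MemLp γ ⊤ m) (hp : MemLp p 2 m) (hq : MemLp q 2 m)
    (hw : MemLp w 2 m) (hw' : MemLp w' 2 m) :
    stabilizedPairing m γ p q (w + w')
      = stabilizedPairing m γ p q w + stabilizedPairing m γ p q w' := by
  simp only [stabilizedPairing, Pi.add_apply, dot_add_left, mul_add]
  rw [integral_add (integrable_dot hw hp) (integrable_dot hw' hp),
    integral_add (integrable_mul_dot hγ hw hq) (integrable_mul_dot hγ hw' hq)]
  ring

/-- Testing (ii) with `(0, λₜ)` and `(λₙ, 0)` and adding amounts to testing with `μ = 0`. -/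
lemma integral_mul_fst_le_stabilizedPairing {M : Set (Ω → ℝ × ℝ)} (hM : ∀ μ ∈ M, MemLp μ 2 m)
    {g : Ω → ℝ} {l : Ω → ℝ × ℝ} (hl : l ∈ M) (hγ : MemLp γ ⊤ m) (hp : MemLp p 2 m)
    (hq : MemLp q 2 m)
    (hineq : ∀ μ ∈ M, stabilizedPairing m γ p q (μ - l) ≤ ∫ ω, g ω * ((μ - l) ω).1 ∂m)
    (hn : (fun ω => ((0 : ℝ), (l ω).2)) ∈ M) (ht : (fun ω => ((l ω).1, (0 : ℝ))) ∈ M) :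
    ∫ ω, g ω * (l ω).1 ∂m ≤ stabilizedPairing m γ p q l := by
  set wn := (fun ω => ((0 : ℝ), (l ω).2)) - l
  set wt := (fun ω => ((l ω).1, (0 : ℝ))) - l
  have hsum : wn + wt = -l := by
    ext ω <;> simp [wn, wt]
  have hpair := stabilizedPairing_add hγ hp hq ((hM _ hn).sub (hM l hl)) ((hM _ ht).sub (hM l hl))
  rw [hsum, stabilizedPairing_neg] at hpair
  have hgn : ∫ ω, g ω * (wn ω).1 ∂m = -∫ ω, g ω * (l ω).1 ∂m := by
    simp [wn, integral_neg]
  have hgt : ∫ ω, g ω * (wt ω).1 ∂m = 0 := by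
    simp [wt]
  linarith [hineq _ hn, hineq _ ht]

end Integrals

theorem stabilized_mixed_stability_general
    {Ω : Type*} [MeasurableSpace Ω] (m : Measure Ω)
    (γ : Ω → ℝ) (hγ : MemLp γ ⊤ m)
    {V : Type*} [NormedAddCommGroup V] [InnerProductSpace ℝ V]
    (τ T : V →ₗ[ℝ] Ω → ℝ × ℝ)
    (hτ : ∀ v : V, MemLp (τ v) 2 m) (hT : ∀ v : V, MemLp (T v) 2 m)
    (a : V →ₗ[ℝ] V →ₗ[ℝ] ℝ) (L : V →ₗ[ℝ] ℝ)
    (g : Ω → ℝ)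
    (M : Set (Ω → ℝ × ℝ)) (hM : ∀ μ ∈ M, MemLp μ 2 m)
    (α : ℝ)
    (hcoer : ∀ v : V,
      α * ‖v‖ ^ 2 ≤ a v v - ∫ ω, γ ω * ((T v ω).1 ^ 2 + (T v ω).2 ^ 2) ∂m)
    (u : V) (l : Ω → ℝ × ℝ) (hl : l ∈ M)
    (heq : ∀ v : V,
      a u v + (∫ ω, ((l ω).1 * (τ v ω).1 + (l ω).2 * (τ v ω).2) ∂m)
        - (∫ ω, γ ω * (((l ω).1 + (T u ω).1) * (T v ω).1
            + ((l ω).2 + (T u ω).2) * (T v ω).2) ∂m) = L v)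
    (hineq : ∀ μ ∈ M,
      (∫ ω, (((μ ω).1 - (l ω).1) * (τ u ω).1
          + ((μ ω).2 - (l ω).2) * (τ u ω).2) ∂m)
        - (∫ ω, γ ω * (((μ ω).1 - (l ω).1) * ((l ω).1 + (T u ω).1)
            + ((μ ω).2 - (l ω).2) * ((l ω).2 + (T u ω).2)) ∂m)
      ≤ ∫ ω, g ω * ((μ ω).1 - (l ω).1) ∂m)
    (hmod₁ : (fun ω => ((0 : ℝ), (l ω).2)) ∈ M)
    (hmod₃ : (fun ω => ((l ω).1, (0 : ℝ))) ∈ M)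
    (C₀ : ℝ) (hL : ∀ v : V, |L v| ≤ C₀ * ‖v‖) :
    α * ‖u‖ ^ 2 + (∫ ω, γ ω * ((l ω).1 ^ 2 + (l ω).2 ^ 2) ∂m)
      ≤ C₀ * ‖u‖ - ∫ ω, g ω * (l ω).1 ∂m := by
  have hlu : MemLp l 2 m := hM l hl
  have hu : a u u + (∫ ω, dot (l ω) (τ u ω) ∂m) - ∫ ω, γ ω * dot ((l + T u) ω) (T u ω) ∂m
      = L u := heq u
  have htest : ∫ ω, g ω * (l ω).1 ∂m ≤ stabilizedPairing m γ (τ u) (l + T u) l :=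
    integral_mul_fst_le_stabilizedPairing hM hl hγ (hτ u) (hlu.add (hT u)) hineq hmod₁ hmod₃
  have henergy := integral_mul_dot_add_sub_sq_add_sq hγ hlu (hT u)
  unfold stabilizedPairing at htest
  linarith [hcoer u, le_abs_self (L u), hL u]

/-- Stability of the abstract stabilized mixed problem: if `(u, λ)` solves (i)–(ii), the
modified multipliers `(0, λₜ)`, `(2λₙ, λₜ)`, `(λₙ, 0)` belong to `M`, and `|L(v)| ≤ C₀‖v‖`,
then `α ‖u‖² + ∫ γ |λ|² dm ≤ C₀ ‖u‖ − ∫ g λₙ dm`. -/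
theorem stabilized_mixed_stability
    {Ω : Type*} [MeasurableSpace Ω] (m : Measure Ω)
    (γ : Ω → ℝ) (hγ : MemLp γ ⊤ m) (hγpos : ∀ᵐ ω ∂m, 0 < γ ω)
    {V : Type*} [NormedAddCommGroup V] [InnerProductSpace ℝ V]
    (τ T : V →ₗ[ℝ] Ω → ℝ × ℝ)
    (hτ : ∀ v : V, MemLp (τ v) 2 m) (hT : ∀ v : V, MemLp (T v) 2 m)
    (a : V →ₗ[ℝ] V →ₗ[ℝ] ℝ) (L : V →ₗ[ℝ] ℝ)
    (g : Ω → ℝ) (hg : MemLp g 2 m)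
    (M : Set (Ω → ℝ × ℝ)) (hM : ∀ μ ∈ M, MemLp μ 2 m)
    (α : ℝ) (hα : 0 < α)
    (hcoer : ∀ v : V,
      α * ‖v‖ ^ 2 ≤ a v v - ∫ ω, γ ω * ((T v ω).1 ^ 2 + (T v ω).2 ^ 2) ∂m)
    (u : V) (l : Ω → ℝ × ℝ) (hl : l ∈ M)
    (heq : ∀ v : V,
      a u v + (∫ ω, ((l ω).1 * (τ v ω).1 + (l ω).2 * (τ v ω).2) ∂m)
        - (∫ ω, γ ω * (((l ω).1 + (T u ω).1) * (T v ω).1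
            + ((l ω).2 + (T u ω).2) * (T v ω).2) ∂m) = L v)
    (hineq : ∀ μ ∈ M,
      (∫ ω, (((μ ω).1 - (l ω).1) * (τ u ω).1
          + ((μ ω).2 - (l ω).2) * (τ u ω).2) ∂m)
        - (∫ ω, γ ω * (((μ ω).1 - (l ω).1) * ((l ω).1 + (T u ω).1)
            + ((μ ω).2 - (l ω).2) * ((l ω).2 + (T u ω).2)) ∂m)
      ≤ ∫ ω, g ω * ((μ ω).1 - (l ω).1) ∂m)
    (hmod₁ : (fun ω => ((0 : ℝ), (l ω).2)) ∈ M)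
    (hmod₂ : (fun ω => (2 * (l ω).1, (l ω).2)) ∈ M)
    (hmod₃ : (fun ω => ((l ω).1, (0 : ℝ))) ∈ M)
    (C₀ : ℝ) (hC₀ : 0 ≤ C₀) (hL : ∀ v : V, |L v| ≤ C₀ * ‖v‖) :
    α * ‖u‖ ^ 2 + (∫ ω, γ ω * ((l ω).1 ^ 2 + (l ω).2 ^ 2) ∂m)
      ≤ C₀ * ‖u‖ - ∫ ω, g ω * (l ω).1 ∂m :=
  stabilized_mixed_stability_general m γ hγ τ T hτ hT a L g M hM α hcoer u l hl heq hineq hmod₁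
    hmod₃ C₀ hL
end
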